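/- Let N ≥ 1 be a natural number and let q, a, e ∈ ℂ with |q| < 1, e ≠ 0, and suppose 1 − a q^k ≠ 0 for 1 ≤ k ≤ N. Then (aq)_N · ∑_{n=1}^N [N,n]_q (−1)^{n−1} n (q/e)_n (ae)^n q^{n(n−1)/2} / (aq)_n = ∑_{n=1}^N [N,n]_q (ae)_{N−n} (q)_n (q/e)_n (ae)^n / (1 − q^n). -/

import Mathlib

open Finset

/-- Finite q-Pochhammer symbol `(a;q)_n`. -/
noncomputable def qPoch (q a : ℂ) (n : ℕ) : ℂ :=
  ∏ k ∈ Finset.range n, (1 - a * q ^ k)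

/-- Infinite q-Pochhammer symbol `(a;q)_∞`. -/
noncomputable def qPochInf (q a : ℂ) : ℂ :=
  ∏' k : ℕ, (1 - a * q ^ k)

/-- q-binomial coefficient. -/
noncomputable def qBinom (q : ℂ) (N n : ℕ) : ℂ :=
  qPoch q q N / (qPoch q q n * qPoch q q (N - n))

namespace Stmt12

lemma qPoch_succ (q x : ℂ) (n : ℕ) :
    qPoch q x (n + 1) = qPoch q x n * (1 - x * q ^ n) := Finset.prod_range_succ _ n

lemma qPoch_add (q x : ℂ) (m n : ℕ) :
    qPoch q x (m + n) = qPoch q x m * qPoch q (x * q ^ m) n := by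
  rw [qPoch, qPoch, qPoch, Finset.prod_range_add]
  congr 1
  refine Finset.prod_congr rfl fun k _ => ?_
  rw [pow_add]; ring

lemma one_sub_pow_ne {q : ℂ} (hq : ‖q‖ < 1) {k : ℕ} (hk : 1 ≤ k) :
    (1 : ℂ) - q ^ k ≠ 0 := by
  intro h
  have h1 : q ^ k = 1 := by linear_combination -h
  have h2 : ‖q ^ k‖ < 1 := by
    rw [norm_pow]
    calc ‖q‖ ^ k ≤ ‖q‖ ^ 1 :=
          pow_le_pow_of_le_one (norm_nonneg q) hq.le hk
      _ < 1 := by simpa using hq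
  rw [h1] at h2; simp at h2

lemma qq_ne {q : ℂ} (hq : ‖q‖ < 1) (n : ℕ) : qPoch q q n ≠ 0 := by
  rw [qPoch]
  refine Finset.prod_ne_zero_iff.mpr fun k _ => ?_
  have : q * q ^ k = q ^ (k + 1) := by ring
  rw [this]
  exact one_sub_pow_ne hq (by omega)

lemma tri (i : ℕ) : (i + 1) * i / 2 = i * (i - 1) / 2 + i := by
  have h : (i + 1).choose 2 = i.choose 1 + i.choose 2 := Nat.choose_succ_succ i 1
  rw [Nat.choose_two_right, Nat.choose_two_right, Nat.choose_one_right] at h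
  simpa [Nat.add_comm] using h

noncomputable def gb (q : ℂ) : ℕ → ℕ → ℂ
  | 0, 0 => 1
  | 0, _ + 1 => 0
  | _ + 1, 0 => 1
  | M + 1, j + 1 => gb q M (j + 1) + q ^ (M - j) * gb q M j

lemma gb_zero_right (q : ℂ) (M : ℕ) : gb q M 0 = 1 := by cases M <;> rfl

lemma gb_zero (q : ℂ) : ∀ M j, M < j → gb q M j = 0 := by
  intro M
  induction M with
  | zero => intro j hj; match j, hj with
    | j + 1, _ => rfl
  | succ M ih =>
    intro j hj
    match j, hj with
    | j + 1, hj =>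
      show gb q M (j + 1) + q ^ (M - j) * gb q M j = 0
      rw [ih _ (by omega), ih _ (by omega)]; ring

lemma qBinom_pascal {q : ℂ} (hq : ‖q‖ < 1) {M j : ℕ} (hj : j < M) :
    qBinom q (M + 1) (j + 1) = qBinom q M (j + 1) + q ^ (M - j) * qBinom q M j := by
  obtain ⟨c, rfl⟩ : ∃ c, M = j + c + 1 := ⟨M - j - 1, by omega⟩
  rw [qBinom, qBinom, qBinom]
  rw [show j + c + 1 + 1 - (j + 1) = c + 1 by omega, show j + c + 1 - (j + 1) = c by omega,
    show j + c + 1 - j = c + 1 by omega]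
  rw [qPoch_succ q q (j + c + 1), qPoch_succ q q c, qPoch_succ q q j]
  have h1 : qPoch q q j ≠ 0 := qq_ne hq j
  have h2 : qPoch q q c ≠ 0 := qq_ne hq c
  have h3 : qPoch q q (j + c + 1) ≠ 0 := qq_ne hq _
  have h4 : (1 : ℂ) - q * q ^ c ≠ 0 := by
    have := qq_ne hq (c + 1); rw [qPoch_succ] at this
    exact right_ne_zero_of_mul this
  have h5 : (1 : ℂ) - q * q ^ j ≠ 0 := by
    have := qq_ne hq (j + 1); rw [qPoch_succ] at this
    exact right_ne_zero_of_mul this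
  field_simp
  ring

lemma gb_eq {q : ℂ} (hq : ‖q‖ < 1) : ∀ M j, j ≤ M → gb q M j = qBinom q M j := by
  intro M
  induction M with
  | zero =>
    intro j hj
    interval_cases j
    show (1 : ℂ) = _
    rw [qBinom]
    simp [qPoch]
  | succ M ih =>
    intro j hj
    match j with
    | 0 =>
      show (1 : ℂ) = _
      rw [qBinom]
      have : qPoch q q 0 = 1 := by simp [qPoch]
      rw [this, Nat.sub_zero, one_mul, div_self (qq_ne hq _)]
    | j + 1 =>
      show gb q M (j + 1) + q ^ (M - j) * gb q M j = _
      rcases Nat.lt_or_ge j M with h | h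
      · rw [ih _ (by omega), ih _ (by omega), qBinom_pascal hq h]
      · have hjM : j = M := by omega
        subst hjM
        rw [gb_zero q j (j + 1) (by omega), ih j le_rfl]
        rw [show j - j = 0 by omega, pow_zero, qBinom, qBinom, Nat.sub_self,
          show j + 1 - (j + 1) = 0 by omega]
        have h0 : qPoch q q 0 = 1 := by simp [qPoch]
        rw [h0, mul_one, mul_one, div_self (qq_ne hq _), div_self (qq_ne hq _)]
        ring

lemma vander (q Z Y : ℂ) : ∀ M, qPoch q (Z * Y) M
    = ∑ j ∈ range (M + 1), gb q M j * qPoch q Z j * Y ^ j * qPoch q Y (M - j) := by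
  intro M
  induction M with
  | zero => simp [qPoch, gb]
  | succ M ih =>
    rw [Finset.sum_range_succ']
    have step1 : ∀ i ∈ range (M + 1),
        gb q (M + 1) (i + 1) * qPoch q Z (i + 1) * Y ^ (i + 1) * qPoch q Y (M + 1 - (i + 1))
        = gb q M (i + 1) * qPoch q Z (i + 1) * Y ^ (i + 1) * qPoch q Y (M - i)
          + q ^ (M - i) * gb q M i * (qPoch q Z (i + 1) * Y ^ (i + 1) * qPoch q Y (M - i)) := by
      intro i _
      rw [show M + 1 - (i + 1) = M - i by omega]
      show (gb q M (i + 1) + q ^ (M - i) * gb q M i) * _ * _ * _ = _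
      ring
    rw [Finset.sum_congr rfl step1, Finset.sum_add_distrib]
    have e0 : gb q (M + 1) 0 * qPoch q Z 0 * Y ^ 0 * qPoch q Y (M + 1 - 0) = qPoch q Y (M + 1) := by
      show (1 : ℂ) * _ * _ * _ = _
      simp [qPoch]
    rw [e0]
    have hA : (∑ i ∈ range (M + 1),
          gb q M (i + 1) * qPoch q Z (i + 1) * Y ^ (i + 1) * qPoch q Y (M - i)) + qPoch q Y (M + 1)
        = ∑ j ∈ range (M + 1), gb q M j * qPoch q Z j * Y ^ j *
            (qPoch q Y (M - j) * (1 - Y * q ^ (M - j))) := by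
      have h1 : ∑ j ∈ range (M + 2), gb q M j * qPoch q Z j * Y ^ j * qPoch q Y (M + 1 - j)
          = (∑ i ∈ range (M + 1),
              gb q M (i + 1) * qPoch q Z (i + 1) * Y ^ (i + 1) * qPoch q Y (M - i))
            + qPoch q Y (M + 1) := by
        rw [Finset.sum_range_succ']
        congr 1
        · exact Finset.sum_congr rfl fun i _ => by rw [show M + 1 - (i + 1) = M - i by omega]
        · rw [gb_zero_right]
          simp [qPoch]
      rw [← h1, Finset.sum_range_succ, gb_zero q M (M + 1) (by omega)]
      simp only [zero_mul, add_zero]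
      refine Finset.sum_congr rfl fun j hj => ?_
      rw [show M + 1 - j = (M - j) + 1 by have := Finset.mem_range.mp hj; omega, qPoch_succ]
    rw [add_right_comm, hA]
    have hB : ∀ i ∈ range (M + 1),
        q ^ (M - i) * gb q M i * (qPoch q Z (i + 1) * Y ^ (i + 1) * qPoch q Y (M - i))
        = gb q M i * qPoch q Z i * Y ^ i * qPoch q Y (M - i) * (q ^ (M - i) * Y * (1 - Z * q ^ i)) := by
      intro i _
      rw [qPoch_succ]
      ring
    rw [Finset.sum_congr rfl hB, ← Finset.sum_add_distrib]
    have hC : ∀ j ∈ range (M + 1),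
        gb q M j * qPoch q Z j * Y ^ j * (qPoch q Y (M - j) * (1 - Y * q ^ (M - j)))
        + gb q M j * qPoch q Z j * Y ^ j * qPoch q Y (M - j) * (q ^ (M - j) * Y * (1 - Z * q ^ j))
        = gb q M j * qPoch q Z j * Y ^ j * qPoch q Y (M - j) * (1 - Z * Y * q ^ M) := by
      intro j hj
      have hq' : q ^ (M - j) * q ^ j = q ^ M := by
        rw [← pow_add]; congr 1; have := Finset.mem_range.mp hj; omega
      rw [← hq']
      ring
    rw [Finset.sum_congr rfl hC, ← Finset.sum_mul, ← ih, ← qPoch_succ]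

noncomputable def R0 (q : ℂ) (M : ℕ) : ℂ :=
  ∑ j ∈ range (M + 1), gb q M j * (-1 : ℂ) ^ j * q ^ (j * (j - 1) / 2)

noncomputable def TT (q : ℂ) (M : ℕ) : ℂ :=
  ∑ j ∈ range (M + 1), gb q M j * (-1 : ℂ) ^ (j - 1) * (j : ℂ) * q ^ (j * (j - 1) / 2)

lemma pow_shift (q : ℂ) {M i : ℕ} (hi : i ≤ M) :
    q ^ (M - i) * q ^ ((i + 1) * i / 2) = q ^ M * q ^ (i * (i - 1) / 2) := by
  rw [← pow_add, ← pow_add, tri]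
  congr 1; omega

lemma R0_step (q : ℂ) (M : ℕ) : R0 q (M + 1) = (1 - q ^ M) * R0 q M := by
  rw [R0, Finset.sum_range_succ']
  have step1 : ∀ i ∈ range (M + 1),
      gb q (M + 1) (i + 1) * (-1 : ℂ) ^ (i + 1) * q ^ ((i + 1) * (i + 1 - 1) / 2)
      = gb q M (i + 1) * (-1 : ℂ) ^ (i + 1) * q ^ ((i + 1) * i / 2)
        + q ^ (M - i) * gb q M i * ((-1 : ℂ) ^ (i + 1) * q ^ ((i + 1) * i / 2)) := by
    intro i _
    rw [show i + 1 - 1 = i by omega]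
    show (gb q M (i + 1) + q ^ (M - i) * gb q M i) * _ * _ = _
    ring
  rw [Finset.sum_congr rfl step1, Finset.sum_add_distrib]
  have e0 : gb q (M + 1) 0 * (-1 : ℂ) ^ 0 * q ^ (0 * (0 - 1) / 2) = 1 := by
    rw [gb_zero_right]; norm_num
  rw [e0]
  have hA : (∑ i ∈ range (M + 1),
        gb q M (i + 1) * (-1 : ℂ) ^ (i + 1) * q ^ ((i + 1) * i / 2)) + 1 = R0 q M := by
    have h1 : ∑ j ∈ range (M + 2), gb q M j * (-1 : ℂ) ^ j * q ^ (j * (j - 1) / 2)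
        = (∑ i ∈ range (M + 1), gb q M (i + 1) * (-1 : ℂ) ^ (i + 1) * q ^ ((i + 1) * i / 2)) + 1 := by
      rw [Finset.sum_range_succ']
      congr 1
      rw [gb_zero_right]; norm_num
    rw [← h1, Finset.sum_range_succ, gb_zero q M (M + 1) (by omega)]
    simp only [zero_mul, add_zero]
    rfl
  rw [add_right_comm, hA]
  have hB : ∀ i ∈ range (M + 1),
      q ^ (M - i) * gb q M i * ((-1 : ℂ) ^ (i + 1) * q ^ ((i + 1) * i / 2))
      = -(q ^ M * (gb q M i * (-1 : ℂ) ^ i * q ^ (i * (i - 1) / 2))) := by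
    intro i hi
    have hp := pow_shift q (Nat.lt_succ_iff.mp (Finset.mem_range.mp hi))
    linear_combination (-(gb q M i * (-1 : ℂ) ^ i)) * hp
  rw [Finset.sum_congr rfl hB, Finset.sum_neg_distrib, ← Finset.mul_sum]
  rw [show (∑ i ∈ range (M + 1), gb q M i * (-1 : ℂ) ^ i * q ^ (i * (i - 1) / 2)) = R0 q M from rfl]
  ring

lemma R0_eq_zero (q : ℂ) : ∀ M, 1 ≤ M → R0 q M = 0 := by
  intro M hM
  induction M with
  | zero => omega
  | succ M ih =>
    rcases Nat.eq_or_lt_of_le hM with h | h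
    · norm_num [R0, Finset.sum_range_succ, gb, ← h]
    · rw [R0_step, ih (by omega)]; ring

lemma negpow (i : ℕ) : ((-1 : ℂ)) ^ i * (i : ℂ) = -((-1 : ℂ) ^ (i - 1) * (i : ℂ)) := by
  match i with
  | 0 => norm_num
  | i + 1 =>
    rw [show i + 1 - 1 = i by omega, pow_succ]
    ring

lemma TT_step (q : ℂ) {M : ℕ} (hM : 1 ≤ M) : TT q (M + 1) = (1 - q ^ M) * TT q M := by
  rw [TT, Finset.sum_range_succ']
  have step1 : ∀ i ∈ range (M + 1),
      gb q (M + 1) (i + 1) * (-1 : ℂ) ^ (i + 1 - 1) * ((i + 1 : ℕ) : ℂ) * q ^ ((i + 1) * (i + 1 - 1) / 2)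
      = gb q M (i + 1) * (-1 : ℂ) ^ (i + 1 - 1) * ((i + 1 : ℕ) : ℂ) * q ^ ((i + 1) * i / 2)
        + q ^ (M - i) * gb q M i * ((-1 : ℂ) ^ i * ((i + 1 : ℕ) : ℂ) * q ^ ((i + 1) * i / 2)) := by
    intro i _
    rw [show i + 1 - 1 = i by omega]
    show (gb q M (i + 1) + q ^ (M - i) * gb q M i) * _ * _ * _ = _
    ring
  rw [Finset.sum_congr rfl step1, Finset.sum_add_distrib]
  have e0 : gb q (M + 1) 0 * (-1 : ℂ) ^ (0 - 1) * ((0 : ℕ) : ℂ) * q ^ (0 * (0 - 1) / 2) = 0 := by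
    norm_num
  rw [e0, add_zero]
  have hA : (∑ i ∈ range (M + 1),
        gb q M (i + 1) * (-1 : ℂ) ^ (i + 1 - 1) * ((i + 1 : ℕ) : ℂ) * q ^ ((i + 1) * i / 2))
      = TT q M := by
    have h1 : ∑ j ∈ range (M + 2),
          gb q M j * (-1 : ℂ) ^ (j - 1) * (j : ℂ) * q ^ (j * (j - 1) / 2)
        = ∑ i ∈ range (M + 1),
            gb q M (i + 1) * (-1 : ℂ) ^ (i + 1 - 1) * ((i + 1 : ℕ) : ℂ) * q ^ ((i + 1) * i / 2) := by
      rw [Finset.sum_range_succ']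
      norm_num
    rw [← h1, Finset.sum_range_succ, gb_zero q M (M + 1) (by omega)]
    simp only [zero_mul, add_zero]
    rfl
  rw [hA]
  have hB : ∀ i ∈ range (M + 1),
      q ^ (M - i) * gb q M i * ((-1 : ℂ) ^ i * ((i + 1 : ℕ) : ℂ) * q ^ ((i + 1) * i / 2))
      = -(q ^ M * (gb q M i * (-1 : ℂ) ^ (i - 1) * (i : ℂ) * q ^ (i * (i - 1) / 2)))
        + q ^ M * (gb q M i * (-1 : ℂ) ^ i * q ^ (i * (i - 1) / 2)) := by
    intro i hi
    have hp := pow_shift q (Nat.lt_succ_iff.mp (Finset.mem_range.mp hi))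
    have hn := negpow i
    push_cast
    linear_combination (gb q M i * (-1 : ℂ) ^ i * ((i : ℂ) + 1)) * hp
      + (q ^ M * gb q M i * q ^ (i * (i - 1) / 2)) * hn
  rw [Finset.sum_congr rfl hB, Finset.sum_add_distrib, Finset.sum_neg_distrib,
    ← Finset.mul_sum, ← Finset.mul_sum]
  rw [show (∑ i ∈ range (M + 1), gb q M i * (-1 : ℂ) ^ (i - 1) * (i : ℂ) * q ^ (i * (i - 1) / 2))
      = TT q M from rfl,
    show (∑ i ∈ range (M + 1), gb q M i * (-1 : ℂ) ^ i * q ^ (i * (i - 1) / 2)) = R0 q M from rfl,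
    R0_eq_zero q M hM]
  ring

lemma TT_eq (q : ℂ) : ∀ M, 1 ≤ M → TT q M = qPoch q q (M - 1) := by
  intro M hM
  induction M with
  | zero => omega
  | succ M ih =>
    rcases Nat.eq_or_lt_of_le hM with h | h
    · rw [← h]
      norm_num [TT, Finset.sum_range_succ, gb, qPoch]
    · have hM1 : 1 ≤ M := by omega
      rw [TT_step q hM1, ih hM1, show M + 1 - 1 = (M - 1) + 1 by omega, qPoch_succ]
      have : q * q ^ (M - 1) = q ^ M := by
        rw [← pow_succ']; congr 1; omega
      rw [this]
      ring


lemma qBinom_mul {q : ℂ} (hq : ‖q‖ < 1) {N n j : ℕ} (h : n + j ≤ N) :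
    qBinom q N n * qBinom q (N - n) j = qBinom q N (n + j) * qBinom q (n + j) n := by
  rw [qBinom, qBinom, qBinom, qBinom, show N - n - j = N - (n + j) by omega,
    show n + j - n = j by omega]
  have a1 : qPoch q q n ≠ 0 := qq_ne hq n
  have a2 : qPoch q q j ≠ 0 := qq_ne hq j
  have a3 : qPoch q q (N - n) ≠ 0 := qq_ne hq _
  have a4 : qPoch q q (N - (n + j)) ≠ 0 := qq_ne hq _
  have a5 : qPoch q q (n + j) ≠ 0 := qq_ne hq _
  field_simp

lemma reindex (N : ℕ) (f : ℕ → ℕ → ℂ) :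
    ∑ n ∈ Icc 1 N, ∑ j ∈ range (N - n + 1), f n (n + j)
      = ∑ m ∈ Icc 1 N, ∑ n ∈ Icc 1 m, f n m := by
  rw [Finset.sum_sigma', Finset.sum_sigma']
  refine Finset.sum_nbij' (fun p => ⟨p.1 + p.2, p.1⟩) (fun p => ⟨p.2, p.1 - p.2⟩)
    ?_ ?_ ?_ ?_ ?_
  · rintro ⟨n, j⟩ hp
    simp only [Finset.mem_sigma, Finset.mem_Icc, Finset.mem_range] at *
    omega
  · rintro ⟨m, n⟩ hp
    simp only [Finset.mem_sigma, Finset.mem_Icc, Finset.mem_range] at *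
    omega
  · rintro ⟨n, j⟩ hp
    simp only [Finset.mem_sigma, Finset.mem_Icc, Finset.mem_range] at hp
    simp only [Sigma.ext_iff, heq_eq_eq]
    exact ⟨trivial, by omega⟩
  · rintro ⟨m, n⟩ hp
    simp only [Finset.mem_sigma, Finset.mem_Icc, Finset.mem_range] at hp
    simp only [Sigma.ext_iff, heq_eq_eq]
    exact ⟨by omega, trivial⟩
  · rintro ⟨n, j⟩ _
    rfl

lemma sum_shift (m : ℕ) (f : ℕ → ℂ) (h0 : f 0 = 0) :
    ∑ n ∈ range (m + 1), f n = ∑ n ∈ Icc 1 m, f n := by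
  have h : range (m + 1) = insert 0 (Icc 1 m) := by
    ext x
    simp only [Finset.mem_range, Finset.mem_Icc, Finset.mem_insert]
    omega
  rw [h, Finset.sum_insert (by simp), h0, zero_add]

end Stmt12

open Stmt12

theorem stmt12 (N : ℕ) (hN : 1 ≤ N) (q a e : ℂ) (hq : ‖q‖ < 1)
    (he : e ≠ 0)
    (ha' : ∀ k : ℕ, 1 ≤ k → k ≤ N → 1 - a * q ^ k ≠ 0) :
    qPoch q (a * q) N *
      ∑ n ∈ Finset.Icc 1 N,
        qBinom q N n * (-1 : ℂ) ^ (n - 1) * (n : ℂ) * qPoch q (q / e) n * (a * e) ^ n *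
          q ^ (n * (n - 1) / 2) / qPoch q (a * q) n
    = ∑ n ∈ Finset.Icc 1 N,
        qBinom q N n * qPoch q (a * e) (N - n) * qPoch q q n * qPoch q (q / e) n *
          (a * e) ^ n / (1 - q ^ n) := by
  have haqne : ∀ n, n ≤ N → qPoch q (a * q) n ≠ 0 := by
    intro n hn
    rw [qPoch]
    refine Finset.prod_ne_zero_iff.mpr fun k hk => ?_
    have hk' := Finset.mem_range.mp hk
    rw [show a * q * q ^ k = a * q ^ (k + 1) by ring]
    exact ha' (k + 1) (by omega) (by omega)
  rw [Finset.mul_sum]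
  have h1 : ∀ n ∈ Icc 1 N,
      qPoch q (a * q) N *
        (qBinom q N n * (-1 : ℂ) ^ (n - 1) * (n : ℂ) * qPoch q (q / e) n * (a * e) ^ n *
          q ^ (n * (n - 1) / 2) / qPoch q (a * q) n)
      = ∑ j ∈ range (N - n + 1),
          (fun n m => qBinom q N m * qPoch q (q / e) m * (a * e) ^ m * qPoch q (a * e) (N - m) *
            (qBinom q m n * (-1 : ℂ) ^ (n - 1) * (n : ℂ) * q ^ (n * (n - 1) / 2))) n (n + j) := by
    intro n hn
    simp only [Finset.mem_Icc] at hn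
    have hsplit : qPoch q (a * q) N = qPoch q (a * q) n * qPoch q (a * q * q ^ n) (N - n) := by
      have h := qPoch_add q (a * q) n (N - n)
      rw [show n + (N - n) = N by omega] at h
      exact h
    have hvan : qPoch q (a * q * q ^ n) (N - n)
        = ∑ j ∈ range (N - n + 1), gb q (N - n) j * qPoch q (q / e * q ^ n) j * (a * e) ^ j *
            qPoch q (a * e) (N - n - j) := by
      have h := vander q (q / e * q ^ n) (a * e) (N - n)
      rw [show q / e * q ^ n * (a * e) = a * q * q ^ n by field_simp] at h
      exact h
    have hPn := haqne n hn.2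
    calc qPoch q (a * q) N *
          (qBinom q N n * (-1 : ℂ) ^ (n - 1) * (n : ℂ) * qPoch q (q / e) n * (a * e) ^ n *
            q ^ (n * (n - 1) / 2) / qPoch q (a * q) n)
        = qPoch q (a * q * q ^ n) (N - n) *
            (qBinom q N n * (-1 : ℂ) ^ (n - 1) * (n : ℂ) * qPoch q (q / e) n * (a * e) ^ n *
              q ^ (n * (n - 1) / 2)) := by
          rw [hsplit]
          field_simp
      _ = ∑ j ∈ range (N - n + 1),
            gb q (N - n) j * qPoch q (q / e * q ^ n) j * (a * e) ^ j *
              qPoch q (a * e) (N - n - j) *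
              (qBinom q N n * (-1 : ℂ) ^ (n - 1) * (n : ℂ) * qPoch q (q / e) n * (a * e) ^ n *
                q ^ (n * (n - 1) / 2)) := by
          rw [hvan, Finset.sum_mul]
      _ = _ := by
          refine Finset.sum_congr rfl fun j hj => ?_
          have hj' := Finset.mem_range.mp hj
          have hgb : gb q (N - n) j = qBinom q (N - n) j := gb_eq hq _ _ (by omega)
          have hmerge := qBinom_mul hq (N := N) (n := n) (j := j) (by omega)
          have hpoch : qPoch q (q / e) n * qPoch q (q / e * q ^ n) j
              = qPoch q (q / e) (n + j) := (qPoch_add q (q / e) n j).symm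
          have hpow : (a * e) ^ n * (a * e) ^ j = (a * e) ^ (n + j) := (pow_add _ n j).symm
          show _ = qBinom q N (n + j) * qPoch q (q / e) (n + j) * (a * e) ^ (n + j) *
            qPoch q (a * e) (N - (n + j)) *
            (qBinom q (n + j) n * (-1 : ℂ) ^ (n - 1) * (n : ℂ) * q ^ (n * (n - 1) / 2))
          rw [show N - n - j = N - (n + j) by omega] at *
          rw [hgb]
          linear_combination ((-1 : ℂ) ^ (n - 1) * (n : ℂ) * qPoch q (q / e) n *
            qPoch q (q / e * q ^ n) j * (a * e) ^ n * (a * e) ^ j * q ^ (n * (n - 1) / 2) *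
            qPoch q (a * e) (N - (n + j))) * hmerge
            + (qBinom q N (n + j) * qBinom q (n + j) n * (-1 : ℂ) ^ (n - 1) * (n : ℂ) *
              (a * e) ^ n * (a * e) ^ j * q ^ (n * (n - 1) / 2) *
              qPoch q (a * e) (N - (n + j))) * hpoch
  rw [Finset.sum_congr rfl h1, reindex N
    (fun n m => qBinom q N m * qPoch q (q / e) m * (a * e) ^ m * qPoch q (a * e) (N - m) *
      (qBinom q m n * (-1 : ℂ) ^ (n - 1) * (n : ℂ) * q ^ (n * (n - 1) / 2)))]
  refine Finset.sum_congr rfl fun m hm => ?_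
  simp only [Finset.mem_Icc] at hm
  beta_reduce
  have hinner : ∑ n ∈ Icc 1 m,
      (qBinom q m n * (-1 : ℂ) ^ (n - 1) * (n : ℂ) * q ^ (n * (n - 1) / 2))
      = qPoch q q (m - 1) := by
    have e1 : ∑ n ∈ Icc 1 m,
        (qBinom q m n * (-1 : ℂ) ^ (n - 1) * (n : ℂ) * q ^ (n * (n - 1) / 2))
        = ∑ n ∈ Icc 1 m, (gb q m n * (-1 : ℂ) ^ (n - 1) * (n : ℂ) * q ^ (n * (n - 1) / 2)) := by
      refine Finset.sum_congr rfl fun n hn => ?_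
      simp only [Finset.mem_Icc] at hn
      rw [gb_eq hq _ _ hn.2]
    rw [e1, ← sum_shift m _ (by norm_num)]
    exact (TT_eq q m hm.1)
  rw [← Finset.mul_sum, hinner]
  have hm1 : qPoch q q m = qPoch q q (m - 1) * (1 - q ^ m) := by
    have h := qPoch_succ q q (m - 1)
    rw [show m - 1 + 1 = m by omega] at h
    rw [h, show q * q ^ (m - 1) = q ^ m by rw [← pow_succ']; congr 1; omega]
  rw [hm1]
  have hne : (1 : ℂ) - q ^ m ≠ 0 := one_sub_pow_ne hq hm.1
  field_simp
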